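/- arXiv:1203.3672 — 3 statements merged into one kernel-verified Lean document; each statement's English description precedes it below -/
import Mathlib

section
/- Let S_1,…,S_I be independent Bernoulli random variables with Pr(S_i=1)=p_i where 1/(1+Γ) ≤ p_i ≤ Γ/(1+Γ) for each i, and let a_1,…,a_I ≥ 0 be fixed nonnegative scores. Then for every k, Pr(Σ a_i T̲_i ≥ k) ≤ Pr(Σ a_i S_i ≥ k) ≤ Pr(Σ a_i T̄_i ≥ k), where T̲_i are i.i.d. Bernoulli(1/(1+Γ)) and T̄_i are i.i.d. Bernoulli(Γ/(1+Γ)). -/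
/-!
The event `{k ≤ ∑ aᵢ Sᵢ}` is an upper set of `Fin I → Bool` because the scores are nonnegative,
and the probability of an upper set under a product of Bernoulli laws is monotone in each
parameter: conditioning on the first coordinate writes it as `p x + (1 - p) y` with `y ≤ x`,
the probabilities of the two slices, which are again upper sets.
-/

open MeasureTheory
open scoped ENNReal NNReal

theorem ENNReal.mul_add_one_sub_mul_le {p q x y : ℝ≥0∞} (hpq : p ≤ q) (hq : q ≤ 1)
    (hyx : y ≤ x) : p * x + (1 - p) * y ≤ q * x + (1 - q) * y :=
  calc p * x + (1 - p) * y = p * x + (q - p) * y + (1 - q) * y := by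
        rw [← tsub_add_tsub_cancel hq hpq, add_mul, add_assoc, add_comm ((1 - q) * y)]
    _ ≤ p * x + (q - p) * x + (1 - q) * y := by gcongr
    _ = q * x + (1 - q) * y := by rw [← add_mul, add_tsub_cancel_of_le hpq]

theorem isUpperSet_setOf_le_sum {ι : Type*} [Fintype ι] {a : ι → ℝ} (ha : ∀ i, 0 ≤ a i)
    (k : ℝ) : IsUpperSet {ω : ι → Bool | k ≤ ∑ i, a i * if ω i then 1 else 0} := by
  intro ω ω' hωω' hω
  refine hω.trans (Finset.sum_le_sum fun i _ => mul_le_mul_of_nonneg_left ?_ (ha i))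
  have := Bool.le_iff_imp.1 (hωω' i)
  split_ifs <;> simp_all

noncomputable def bernoulliPi {n : ℕ} (r : Fin n → ℝ≥0) (hr : ∀ i, r i ≤ 1) :
    Measure (Fin n → Bool) :=
  Measure.pi fun i => (PMF.bernoulli (r i) (hr i)).toMeasure

theorem bernoulliPi_succ_apply {n : ℕ} (r : Fin (n + 1) → ℝ≥0) (hr : ∀ i, r i ≤ 1)
    (A : Set (Fin (n + 1) → Bool)) :
    bernoulliPi r hr A =
      r 0 * bernoulliPi (Fin.tail r) (fun i => hr i.succ) {ω | Fin.cons true ω ∈ A} +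
        (1 - r 0) * bernoulliPi (Fin.tail r) (fun i => hr i.succ) {ω | Fin.cons false ω ∈ A} := by
  rw [bernoulliPi, ← ((measurePreserving_piFinSuccAbove
    (fun i => (PMF.bernoulli (r i) (hr i)).toMeasure) 0).symm _).measure_preimage_equiv A,
    Measure.prod_apply MeasurableSet.of_discrete, lintegral_fintype, Fintype.sum_bool]
  simp only [MeasurableEquiv.piFinSuccAbove_symm_apply, Fin.insertNthEquiv_zero,
    PMF.toMeasure_apply_singleton _ _ (measurableSet_singleton _), Fin.succAbove_zero]
  change _ * (r 0 : ℝ≥0∞) + _ * ((1 - r 0 : ℝ≥0) : ℝ≥0∞) = _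
  rw [ENNReal.coe_sub, ENNReal.coe_one, mul_comm, mul_comm _ (1 - _)]
  rfl

theorem bernoulliPi_mono_of_isUpperSet {n : ℕ} {p q : Fin n → ℝ≥0} (hp : ∀ i, p i ≤ 1)
    (hq : ∀ i, q i ≤ 1) (hpq : p ≤ q) {A : Set (Fin n → Bool)} (hA : IsUpperSet A) :
    bernoulliPi p hp A ≤ bernoulliPi q hq A := by
  induction n with
  | zero => obtain rfl : p = q := Subsingleton.elim p q; rfl
  | succ n ih =>
    have hslice (b : Bool) : IsUpperSet {ω : Fin n → Bool | Fin.cons b ω ∈ A} :=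
      hA.preimage fun _ _ h => Fin.cons_le_cons.2 ⟨le_rfl, h⟩
    have hsub : {ω : Fin n → Bool | Fin.cons false ω ∈ A} ⊆ {ω | Fin.cons true ω ∈ A} :=
      fun ω h => hA (Fin.cons_le_cons.2 ⟨Bool.false_le _, le_rfl⟩) h
    rw [bernoulliPi_succ_apply, bernoulliPi_succ_apply]
    calc _ ≤ p 0 * bernoulliPi (Fin.tail q) (fun i => hq i.succ) {ω | Fin.cons true ω ∈ A} +
          (1 - p 0) * bernoulliPi (Fin.tail q) (fun i => hq i.succ)
            {ω | Fin.cons false ω ∈ A} := by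
          gcongr _ * ?_ + _ * ?_ <;> exact ih _ _ (fun i => hpq i.succ) (hslice _)
      _ ≤ _ := ENNReal.mul_add_one_sub_mul_le (ENNReal.coe_le_coe.2 (hpq 0))
          (ENNReal.coe_le_one_iff.2 (hq 0)) (measure_mono hsub)

theorem stmt_2_general (I : ℕ) (Γ : ℝ) (p : Fin I → ℝ)
    (hplo : ∀ i, 1 / (1 + Γ) ≤ p i) (hphi : ∀ i, p i ≤ Γ / (1 + Γ))
    (a : Fin I → ℝ) (ha : ∀ i, 0 ≤ a i)
    (hp1 : ∀ i, ENNReal.ofReal (p i) ≤ 1)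
    (hlo1 : ENNReal.ofReal (1 / (1 + Γ)) ≤ 1)
    (hhi1 : ENNReal.ofReal (Γ / (1 + Γ)) ≤ 1) :
    ∀ k : ℝ,
      (Measure.pi fun _ : Fin I =>
            (PMF.bernoulli (Real.toNNReal (1 / (1 + Γ))) (ENNReal.coe_le_one_iff.mp hlo1)).toMeasure)
          {ω : Fin I → Bool | k ≤ ∑ i, a i * (if ω i then 1 else 0)}
        ≤ (Measure.pi fun i : Fin I =>
              (PMF.bernoulli (Real.toNNReal (p i)) (ENNReal.coe_le_one_iff.mp (hp1 i))).toMeasure)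
            {ω : Fin I → Bool | k ≤ ∑ i, a i * (if ω i then 1 else 0)} ∧
      (Measure.pi fun i : Fin I =>
            (PMF.bernoulli (Real.toNNReal (p i)) (ENNReal.coe_le_one_iff.mp (hp1 i))).toMeasure)
          {ω : Fin I → Bool | k ≤ ∑ i, a i * (if ω i then 1 else 0)}
        ≤ (Measure.pi fun _ : Fin I =>
              (PMF.bernoulli (Real.toNNReal (Γ / (1 + Γ))) (ENNReal.coe_le_one_iff.mp hhi1)).toMeasure)
            {ω : Fin I → Bool | k ≤ ∑ i, a i * (if ω i then 1 else 0)} := by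
  intro k
  have hA := isUpperSet_setOf_le_sum ha k
  exact ⟨bernoulliPi_mono_of_isUpperSet _ _ (fun i => Real.toNNReal_le_toNNReal (hplo i)) hA,
    bernoulliPi_mono_of_isUpperSet _ _ (fun i => Real.toNNReal_le_toNNReal (hphi i)) hA⟩

/-- Sensitivity bounds for weighted sums of independent Bernoulli indicators: if
`S_i` are independent Bernoulli with probabilities `p_i ∈ [1/(1+Γ), Γ/(1+Γ)]` and
`a_i ≥ 0`, then for every `k`, the upper-tail probability of `Σ a_i S_i` lies between
those of the i.i.d. Bernoulli(`1/(1+Γ)`) sum and the i.i.d. Bernoulli(`Γ/(1+Γ)`) sum. -/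
theorem stmt_2 (I : ℕ) (Γ : ℝ) (hΓ : 1 ≤ Γ) (p : Fin I → ℝ)
    (hplo : ∀ i, 1 / (1 + Γ) ≤ p i) (hphi : ∀ i, p i ≤ Γ / (1 + Γ))
    (a : Fin I → ℝ) (ha : ∀ i, 0 ≤ a i)
    (hp1 : ∀ i, ENNReal.ofReal (p i) ≤ 1)
    (hlo1 : ENNReal.ofReal (1 / (1 + Γ)) ≤ 1)
    (hhi1 : ENNReal.ofReal (Γ / (1 + Γ)) ≤ 1) :
    ∀ k : ℝ,
      (Measure.pi fun _ : Fin I =>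
            (PMF.bernoulli (Real.toNNReal (1 / (1 + Γ))) (ENNReal.coe_le_one_iff.mp hlo1)).toMeasure)
          {ω : Fin I → Bool | k ≤ ∑ i, a i * (if ω i then 1 else 0)}
        ≤ (Measure.pi fun i : Fin I =>
              (PMF.bernoulli (Real.toNNReal (p i)) (ENNReal.coe_le_one_iff.mp (hp1 i))).toMeasure)
            {ω : Fin I → Bool | k ≤ ∑ i, a i * (if ω i then 1 else 0)} ∧
      (Measure.pi fun i : Fin I =>
            (PMF.bernoulli (Real.toNNReal (p i)) (ENNReal.coe_le_one_iff.mp (hp1 i))).toMeasure)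
          {ω : Fin I → Bool | k ≤ ∑ i, a i * (if ω i then 1 else 0)}
        ≤ (Measure.pi fun _ : Fin I =>
              (PMF.bernoulli (Real.toNNReal (Γ / (1 + Γ))) (ENNReal.coe_le_one_iff.mp hhi1)).toMeasure)
            {ω : Fin I → Bool | k ≤ ∑ i, a i * (if ω i then 1 else 0)} :=
  stmt_2_general I Γ p hplo hphi a ha hp1 hlo1 hhi1
end

section
/- Let B̄₁ ~ Bin(I₁, κ) and B̄₂ ~ Bin(I₂, κ) be independent with κ = Γ/(1+Γ), and let g be a monotone increasing function of two arguments. If (B₁, B₂) are independent with B₁ a sum of independent Bernoulli(p_{1i}) and B₂ a sum of independent Bernoulli(p_{2i}), where all p's lie in [1/(1+Γ), Γ/(1+Γ)], then Pr(g(B₁,B₂) ≥ k) ≤ Pr(g(B̄₁,B̄₂) ≥ k) for every k. -/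
/-!
Call `μ` stochastically below `ν` when `μ s ≤ ν s` for every measurable upper set `s`. This
relation survives monotone pushforwards, and it survives products because a product measure can
be sliced along either factor, so the factors can be raised one at a time. By induction on the
index type it therefore passes to finite products. Bernoulli(`p`) lies below Bernoulli(`κ`)
when `p ≤ κ`, and the event `k ≤ g(B₁, B₂)` is an upper set of outcomes because `g` and the
counts of successes are monotone.
-/

open MeasureTheory

/-- The older Mathlib `PMF.bernoulli`, which took an `ℝ≥0∞` parameter: probability `p` to
`true` and `1 - p` to `false`. -/
noncomputable def PMF.bernoulliENNReal (p : ENNReal) (h : p ≤ 1) : PMF Bool :=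
  PMF.ofFintype (fun b => cond b p (1 - p)) (by simp [h])

namespace MeasureTheory.Measure

def StochasticallyLE {α : Type*} [MeasurableSpace α] [Preorder α] (μ ν : Measure α) : Prop :=
  ∀ s, MeasurableSet s → IsUpperSet s → μ s ≤ ν s

namespace StochasticallyLE

variable {α β : Type*} [MeasurableSpace α] [Preorder α] [MeasurableSpace β] [Preorder β]

theorem refl (μ : Measure α) : StochasticallyLE μ μ := fun _ _ _ => le_rfl

theorem map {μ ν : Measure α} (h : StochasticallyLE μ ν) {f : α → β} (hf : Measurable f)
    (hf_mono : Monotone f) : StochasticallyLE (μ.map f) (ν.map f) := fun s hs hs_up => by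
  rw [map_apply hf hs, map_apply hf hs]
  exact h _ (hf hs) (hs_up.preimage hf_mono)

theorem prod {μ₁ ν₁ : Measure α} {μ₂ ν₂ : Measure β} [SFinite μ₁] [SFinite ν₁] [SFinite μ₂]
    [SFinite ν₂] (h₁ : StochasticallyLE μ₁ ν₁) (h₂ : StochasticallyLE μ₂ ν₂) :
    StochasticallyLE (μ₁.prod μ₂) (ν₁.prod ν₂) := fun s hs hs_up =>
  calc μ₁.prod μ₂ s = ∫⁻ x, μ₂ (Prod.mk x ⁻¹' s) ∂μ₁ := prod_apply hs
    _ ≤ ∫⁻ x, ν₂ (Prod.mk x ⁻¹' s) ∂μ₁ := lintegral_mono fun x =>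
      h₂ _ (measurable_prodMk_left hs) (hs_up.preimage fun _ _ hb => ⟨le_rfl, hb⟩)
    _ = ∫⁻ y, μ₁ ((·, y) ⁻¹' s) ∂ν₂ := by rw [← prod_apply hs, prod_apply_symm hs]
    _ ≤ ∫⁻ y, ν₁ ((·, y) ⁻¹' s) ∂ν₂ := lintegral_mono fun y =>
      h₁ _ (measurable_prodMk_right hs) (hs_up.preimage fun _ _ ha => ⟨ha, le_rfl⟩)
    _ = ν₁.prod ν₂ s := (prod_apply_symm hs).symm

theorem pi {ι : Type*} [Fintype ι] {X : ι → Type*} [∀ i, MeasurableSpace (X i)]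
    [∀ i, Preorder (X i)] {μ ν : ∀ i, Measure (X i)} [∀ i, SigmaFinite (μ i)]
    [∀ i, SigmaFinite (ν i)] (h : ∀ i, StochasticallyLE (μ i) (ν i)) :
    StochasticallyLE (Measure.pi μ) (Measure.pi ν) := by
  revert X
  refine Fintype.induction_empty_option (P := fun ι _ => ∀ {X : ι → Type _}
    [∀ i, MeasurableSpace (X i)] [∀ i, Preorder (X i)] {μ ν : ∀ i, Measure (X i)}
    [∀ i, SigmaFinite (μ i)] [∀ i, SigmaFinite (ν i)], (∀ i, StochasticallyLE (μ i) (ν i)) →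
      StochasticallyLE (Measure.pi μ) (Measure.pi ν)) ?_ ?_ ?_ ι
  · intro ι κ _ e ih X _ _ μ ν _ _ h
    -- the induction principle states `ih` for the instance transported along `e`
    let _ := Fintype.ofEquiv κ e.symm
    have hmono : Monotone (MeasurableEquiv.piCongrLeft X e) := fun f g hfg k => by
      obtain ⟨i, rfl⟩ := e.surjective k
      simpa [MeasurableEquiv.coe_piCongrLeft, Equiv.piCongrLeft_apply_apply] using hfg i
    rw [← (measurePreserving_piCongrLeft μ e).map_eq, ← (measurePreserving_piCongrLeft ν e).map_eq]
    exact (ih fun i => h (e i)).map (MeasurableEquiv.measurable _) hmono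
  · intro X _ _ μ ν _ _ _
    rw [pi_of_empty μ, pi_of_empty ν]
    exact refl _
  · intro ι _ ih X _ _ μ ν _ _ h
    have hmono : Monotone (MeasurableEquiv.piOptionEquivProd X).symm := by
      rintro ⟨f, x⟩ ⟨g, y⟩ ⟨hfg, hxy⟩ (_ | i)
      exacts [hxy, hfg i]
    rw [← pi_map_piOptionEquivProd μ, ← pi_map_piOptionEquivProd ν]
    exact ((ih fun i => h (some i)).prod (h none)).map (MeasurableEquiv.measurable _) hmono

end StochasticallyLE

end MeasureTheory.Measure

open Measure

theorem PMF.bernoulliENNReal_toMeasure_stochasticallyLE {p q : ENNReal} (hp : p ≤ 1) (hq : q ≤ 1)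
    (hpq : p ≤ q) :
    StochasticallyLE (bernoulliENNReal p hp).toMeasure (bernoulliENNReal q hq).toMeasure := by
  intro s _ hs_up
  by_cases hfalse : false ∈ s
  · have : s = Set.univ := Set.eq_univ_of_forall fun b => hs_up (Bool.false_le b) hfalse
    rw [this, measure_univ, measure_univ]
  · have : s ⊆ {true} := fun b hb => by cases b <;> simp_all
    rcases Set.subset_singleton_iff_eq.1 this with rfl | rfl
    · simp
    · simpa [toMeasure_apply_singleton, bernoulliENNReal, ofFintype_apply] using hpq

theorem Finset.monotone_card_filter_univ {ι : Type*} [Fintype ι] :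
    Monotone fun a : ι → Bool => (Finset.univ.filter fun i => a i).card := fun _ _ h =>
  card_le_card (monotone_filter_right _ fun i _ => Bool.le_iff_imp.1 (h i))

theorem stmt_3_general (I₁ I₂ : ℕ) (Γ : ℝ)
    (p₁ : Fin I₁ → ℝ) (p₂ : Fin I₂ → ℝ)
    (hp₁hi : ∀ i, p₁ i ≤ Γ / (1 + Γ))
    (hp₂hi : ∀ i, p₂ i ≤ Γ / (1 + Γ))
    (hp₁1 : ∀ i, ENNReal.ofReal (p₁ i) ≤ 1) (hp₂1 : ∀ i, ENNReal.ofReal (p₂ i) ≤ 1)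
    (hκ1 : ENNReal.ofReal (Γ / (1 + Γ)) ≤ 1)
    (g : ℕ → ℕ → ℝ)
    (hg : ∀ b₁ b₂ b₁' b₂' : ℕ, b₁ ≤ b₁' → b₂ ≤ b₂' → g b₁ b₂ ≤ g b₁' b₂') :
    ∀ k : ℝ,
      ((Measure.pi fun i : Fin I₁ =>
            (PMF.bernoulliENNReal (ENNReal.ofReal (p₁ i)) (hp₁1 i)).toMeasure).prod
          (Measure.pi fun i : Fin I₂ =>
            (PMF.bernoulliENNReal (ENNReal.ofReal (p₂ i)) (hp₂1 i)).toMeasure))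
          {ω : (Fin I₁ → Bool) × (Fin I₂ → Bool) |
            k ≤ g (Finset.univ.filter fun i => ω.1 i).card
                  (Finset.univ.filter fun i => ω.2 i).card}
        ≤ ((Measure.pi fun _ : Fin I₁ =>
              (PMF.bernoulliENNReal (ENNReal.ofReal (Γ / (1 + Γ))) hκ1).toMeasure).prod
            (Measure.pi fun _ : Fin I₂ =>
              (PMF.bernoulliENNReal (ENNReal.ofReal (Γ / (1 + Γ))) hκ1).toMeasure))
            {ω : (Fin I₁ → Bool) × (Fin I₂ → Bool) |
              k ≤ g (Finset.univ.filter fun i => ω.1 i).card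
                    (Finset.univ.filter fun i => ω.2 i).card} := by
  intro k
  have hg_card : Monotone fun ω : (Fin I₁ → Bool) × (Fin I₂ → Bool) =>
      g (Finset.univ.filter fun i => ω.1 i).card (Finset.univ.filter fun i => ω.2 i).card :=
    fun _ _ h => hg _ _ _ _ (Finset.monotone_card_filter_univ h.1)
      (Finset.monotone_card_filter_univ h.2)
  refine (StochasticallyLE.pi fun i => ?_).prod (StochasticallyLE.pi fun i => ?_) _
    .of_discrete fun _ _ h hk => hk.trans (hg_card h)
  exacts [PMF.bernoulliENNReal_toMeasure_stochasticallyLE _ _ (ENNReal.ofReal_le_ofReal (hp₁hi i)),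
    PMF.bernoulliENNReal_toMeasure_stochasticallyLE _ _ (ENNReal.ofReal_le_ofReal (hp₂hi i))]

/-- Upper sensitivity bound of Rosenbaum's model: if `B₁` is a sum of independent
Bernoulli(`p₁ᵢ`) indicators and `B₂` an independent sum of independent
Bernoulli(`p₂ᵢ`) indicators, with all probabilities in `[1/(1+Γ), Γ/(1+Γ)]`, and
`B̄₁ ~ Bin(I₁,κ)`, `B̄₂ ~ Bin(I₂,κ)` are independent with `κ = Γ/(1+Γ)`, then for
every monotone increasing `g` and every `k`,
`Pr(g(B₁,B₂) ≥ k) ≤ Pr(g(B̄₁,B̄₂) ≥ k)`. -/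
theorem stmt_3 (I₁ I₂ : ℕ) (Γ : ℝ) (hΓ : 1 ≤ Γ)
    (p₁ : Fin I₁ → ℝ) (p₂ : Fin I₂ → ℝ)
    (hp₁lo : ∀ i, 1 / (1 + Γ) ≤ p₁ i) (hp₁hi : ∀ i, p₁ i ≤ Γ / (1 + Γ))
    (hp₂lo : ∀ i, 1 / (1 + Γ) ≤ p₂ i) (hp₂hi : ∀ i, p₂ i ≤ Γ / (1 + Γ))
    (hp₁1 : ∀ i, ENNReal.ofReal (p₁ i) ≤ 1) (hp₂1 : ∀ i, ENNReal.ofReal (p₂ i) ≤ 1)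
    (hκ1 : ENNReal.ofReal (Γ / (1 + Γ)) ≤ 1)
    (g : ℕ → ℕ → ℝ)
    (hg : ∀ b₁ b₂ b₁' b₂' : ℕ, b₁ ≤ b₁' → b₂ ≤ b₂' → g b₁ b₂ ≤ g b₁' b₂') :
    ∀ k : ℝ,
      ((Measure.pi fun i : Fin I₁ =>
            (PMF.bernoulliENNReal (ENNReal.ofReal (p₁ i)) (hp₁1 i)).toMeasure).prod
          (Measure.pi fun i : Fin I₂ =>
            (PMF.bernoulliENNReal (ENNReal.ofReal (p₂ i)) (hp₂1 i)).toMeasure))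
          {ω : (Fin I₁ → Bool) × (Fin I₂ → Bool) |
            k ≤ g (Finset.univ.filter fun i => ω.1 i).card
                  (Finset.univ.filter fun i => ω.2 i).card}
        ≤ ((Measure.pi fun _ : Fin I₁ =>
              (PMF.bernoulliENNReal (ENNReal.ofReal (Γ / (1 + Γ))) hκ1).toMeasure).prod
            (Measure.pi fun _ : Fin I₂ =>
              (PMF.bernoulliENNReal (ENNReal.ofReal (Γ / (1 + Γ))) hκ1).toMeasure))
            {ω : (Fin I₁ → Bool) × (Fin I₂ → Bool) |
              k ≤ g (Finset.univ.filter fun i => ω.1 i).card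
                    (Finset.univ.filter fun i => ω.2 i).card} :=
  stmt_3_general I₁ I₂ Γ p₁ p₂ hp₁hi hp₂hi hp₁1 hp₂1 hκ1 g hg
end

section
/- In the favorable situation where Y₁,…,Y_I are i.i.d. from a continuous strictly increasing F, the proportion of positive Y_i among the λ₁·I pairs with largest |Y_i| converges in probability to ζ(λ₁)/λ₁ as I → ∞, where ζ(λ) = 1 − F(H⁻¹(1−λ)) and H(y) = F(y) − F(−y). -/
open MeasureTheory ProbabilityTheory Filter Topology Finset

/-!
Almost surely the `|Y i|` are pairwise distinct and all differ from `y₀`, because the law of `Y 0`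
has no atoms. On such an outcome the `⌈λ₁ I⌉` indices with largest `|Y i|` and the indices with
`y₀ < |Y i|` form two nested sets, so Noether's count differs from `#{i < I | y₀ < Y i}` by at most
`|⌈λ₁ I⌉ - #{i < I | y₀ < |Y i|}|`. By the strong law of large numbers the frequencies of
`y₀ < Y i` and of `y₀ < |Y i|` tend to `1 - F y₀` and `1 - (F y₀ - F (-y₀)) = λ₁`, while
`⌈λ₁ I⌉ / I → λ₁`; so the statistic converges almost surely, hence in probability.
-/

section TopSet

variable {ι α : Type*} [LinearOrder α] {s : Finset ι} {v : ι → α} {i j : ι} {k : ℕ}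

def rankIn (s : Finset ι) (v : ι → α) (i : ι) : ℕ := #{j ∈ s | v i ≤ v j}

/-- With ties in `v`, `topSet s v k` may have fewer than `k` elements. -/
def topSet (s : Finset ι) (v : ι → α) (k : ℕ) : Finset ι := {i ∈ s | rankIn s v i ≤ k}

lemma rankIn_lt_rankIn (hi : i ∈ s) (h : v i < v j) : rankIn s v j < rankIn s v i := by
  refine card_lt_card ⟨monotone_filter_right _ fun l _ hl => h.le.trans hl, fun hsub => ?_⟩
  have := (mem_filter.mp (hsub (mem_filter.mpr ⟨hi, le_rfl⟩))).2
  exact this.not_gt h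

lemma injOn_rankIn (hv : Set.InjOn v s) : Set.InjOn (rankIn s v) s := by
  intro i hi j hj hij
  by_contra hne
  rcases (hv.ne hi hj hne).lt_or_gt with h | h
  · exact (rankIn_lt_rankIn hi h).ne hij.symm
  · exact (rankIn_lt_rankIn hj h).ne hij

lemma image_rankIn (hv : Set.InjOn v s) : s.image (rankIn s v) = Icc 1 #s := by
  refine eq_of_subset_of_card_le (fun r hr => ?_) ?_
  · obtain ⟨i, hi, rfl⟩ := mem_image.mp hr
    exact mem_Icc.mpr ⟨card_pos.mpr ⟨i, mem_filter.mpr ⟨hi, le_rfl⟩⟩, card_filter_le _ _⟩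
  · rw [Nat.card_Icc, card_image_of_injOn (injOn_rankIn hv)]
    omega

lemma card_topSet (hv : Set.InjOn v s) (k : ℕ) : #(topSet s v k) = min k #s := by
  have hinj : Set.InjOn (rankIn s v) (topSet s v k) :=
    (injOn_rankIn hv).mono (coe_subset.mpr (filter_subset _ _))
  have himage : (topSet s v k).image (rankIn s v) = Icc 1 (min k #s) := by
    rw [topSet, ← filter_image (p := (· ≤ k)), image_rankIn hv]
    ext r
    simp only [mem_filter, mem_Icc]
    omega
  rw [← card_image_of_injOn hinj, himage, Nat.card_Icc]
  omega

lemma topSet_subset_or_superset {c : α} (hc : ∀ i ∈ s, v i ≠ c) :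
    topSet s v k ⊆ {i ∈ s | c < v i} ∨ {i ∈ s | c < v i} ⊆ topSet s v k := by
  refine or_iff_not_imp_left.mpr fun h => ?_
  obtain ⟨i, hi, hic⟩ := not_subset.mp h
  obtain ⟨his, hik⟩ := mem_filter.mp hi
  have hvi : v i < c :=
    (hc i his).lt_of_le (not_lt.mp fun h' => hic (mem_filter.mpr ⟨his, h'⟩))
  intro j hj
  obtain ⟨hjs, hcj⟩ := mem_filter.mp hj
  exact mem_filter.mpr ⟨hjs, (rankIn_lt_rankIn his (hvi.trans hcj)).le.trans hik⟩

lemma filter_topSet (p : ι → Prop) [DecidablePred p] :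
    {i ∈ topSet s v k | p i} = {i ∈ s | p i ∧ rankIn s v i ≤ k} := by
  rw [topSet, filter_filter]
  exact filter_congr fun _ _ => and_comm

end TopSet

lemma abs_card_filter_sub_card_filter_le_of_subset {ι : Type*} [DecidableEq ι] {S T : Finset ι}
    (h : S ⊆ T) (p : ι → Prop) [DecidablePred p] :
    |(#{i ∈ S | p i} : ℝ) - #{i ∈ T | p i}| ≤ |(#S : ℝ) - #T| := by
  have hp : #{i ∈ S | p i} ≤ #{i ∈ T | p i} := card_le_card (filter_subset_filter p h)
  have hsdiff : #({i ∈ T | p i} \ {i ∈ S | p i}) ≤ #(T \ S) := by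
    refine card_le_card fun i hi => ?_
    obtain ⟨hiT, hiS⟩ := mem_sdiff.mp hi
    obtain ⟨hT, hpi⟩ := mem_filter.mp hiT
    exact mem_sdiff.mpr ⟨hT, fun hS => hiS (mem_filter.mpr ⟨hS, hpi⟩)⟩
  have hgap : #{i ∈ T | p i} + #S ≤ #{i ∈ S | p i} + #T := by
    have hfilter : #({i ∈ T | p i} \ {i ∈ S | p i}) + #{i ∈ S | p i} = #{i ∈ T | p i} :=
      card_sdiff_add_card_eq_card (filter_subset_filter p h)
    have hall : #(T \ S) + #S = #T := card_sdiff_add_card_eq_card h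
    omega
  have hp' : (#{i ∈ S | p i} : ℝ) ≤ #{i ∈ T | p i} := by exact_mod_cast hp
  have hgap' : (#{i ∈ T | p i} : ℝ) + #S ≤ #{i ∈ S | p i} + #T := by exact_mod_cast hgap
  rw [abs_sub_comm, abs_of_nonneg (sub_nonneg.mpr hp')]
  linarith [neg_abs_le ((#S : ℝ) - #T)]

lemma abs_card_filter_sub_card_filter_le {ι : Type*} [DecidableEq ι] {S T : Finset ι}
    (h : S ⊆ T ∨ T ⊆ S) (p : ι → Prop) [DecidablePred p] :
    |(#{i ∈ S | p i} : ℝ) - #{i ∈ T | p i}| ≤ |(#S : ℝ) - #T| := by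
  rcases h with h | h
  · exact abs_card_filter_sub_card_filter_le_of_subset h p
  · rw [abs_sub_comm, abs_sub_comm (#S : ℝ)]
    exact abs_card_filter_sub_card_filter_le_of_subset h p

lemma tendsto_div_of_abs_sub_le {a b k t : ℕ → ℝ} {x l : ℝ} (hl : l ≠ 0)
    (ha : Tendsto (fun n => a n / n) atTop (𝓝 x)) (hk : Tendsto (fun n => k n / n) atTop (𝓝 l))
    (ht : Tendsto (fun n => t n / n) atTop (𝓝 l)) (hba : ∀ n, |b n - a n| ≤ |k n - t n|) :
    Tendsto (fun n => b n / k n) atTop (𝓝 (x / l)) := by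
  have hgap : Tendsto (fun n => b n / n - a n / n) atTop (𝓝 0) := by
    refine squeeze_zero_norm (fun n => ?_) (by simpa using (hk.sub ht).abs)
    rw [Real.norm_eq_abs, div_sub_div_same, div_sub_div_same, abs_div, abs_div]
    exact div_le_div_of_nonneg_right (hba n) (abs_nonneg _)
  have hb : Tendsto (fun n => b n / n) atTop (𝓝 x) := by simpa using hgap.add ha
  refine (hb.div hk hl).congr' ?_
  filter_upwards [eventually_ne_atTop 0] with n hn
  exact div_div_div_cancel_right₀ (Nat.cast_ne_zero.mpr hn) _ _

theorem tendsto_card_pos_topSet_div {y : ℕ → ℝ} {a c l : ℝ} (hl : 0 < l) (hl₁ : l ≤ 1)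
    (hc : 0 ≤ c) (hinj : Function.Injective fun i => |y i|) (hne : ∀ i, |y i| ≠ c)
    (hpos : Tendsto (fun n : ℕ => (#{i ∈ range n | c < y i} : ℝ) / n) atTop (𝓝 a))
    (habs : Tendsto (fun n : ℕ => (#{i ∈ range n | c < |y i|} : ℝ) / n) atTop (𝓝 l)) :
    Tendsto (fun n : ℕ =>
      (#{i ∈ topSet (range n) (fun i => |y i|) ⌈l * n⌉₊ | 0 < y i} : ℝ) / ⌈l * n⌉₊)
      atTop (𝓝 (a / l)) := by
  refine tendsto_div_of_abs_sub_le hl.ne' hpos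
    ((tendsto_nat_ceil_mul_div_atTop hl.le).comp tendsto_natCast_atTop_atTop) habs fun n => ?_
  have hpos_abs : {i ∈ {i ∈ range n | c < |y i|} | 0 < y i} = {i ∈ range n | c < y i} := by
    rw [filter_filter]
    refine filter_congr fun i _ => ⟨fun ⟨h, hi⟩ => by rwa [abs_of_pos hi] at h,
      fun h => have hi := hc.trans_lt h; ⟨by rwa [abs_of_pos hi], hi⟩⟩
  have hcard : #(topSet (range n) (fun i => |y i|) ⌈l * n⌉₊) = ⌈l * n⌉₊ := by
    rw [card_topSet hinj.injOn, card_range, min_eq_left (Nat.ceil_le.mpr ?_)]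
    exact mul_le_of_le_one_left n.cast_nonneg hl₁
  have hbound := abs_card_filter_sub_card_filter_le
    (topSet_subset_or_superset (s := range n) (k := ⌈l * n⌉₊) fun i _ => hne i) fun i => 0 < y i
  rwa [hcard, hpos_abs] at hbound

section Probability

variable {Ω : Type*} [MeasurableSpace Ω] {μ : Measure Ω}

lemma cdf_map_apply [IsProbabilityMeasure μ] {X : Ω → ℝ} (hX : Measurable X) (t : ℝ) :
    cdf (μ.map X) t = (μ {ω | X ω ≤ t}).toReal := by
  have := Measure.isProbabilityMeasure_map (μ := μ) hX.aemeasurable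
  rw [cdf_eq_real, map_measureReal_apply hX measurableSet_Iic]
  rfl

lemma nullSingletonClass_of_continuous_cdf {ν : Measure ℝ} [IsProbabilityMeasure ν]
    (h : Continuous (cdf ν)) : NullSingletonClass ν := by
  refine ⟨fun a => ?_⟩
  have hsingleton := (cdf ν).measure_singleton a
  rw [measure_cdf, h.continuousWithinAt.leftLim_eq, sub_self, ENNReal.ofReal_zero] at hsingleton
  exact hsingleton

lemma measureReal_Ioi_eq_one_sub_cdf (ν : Measure ℝ) [IsProbabilityMeasure ν] (c : ℝ) :
    ν.real (Set.Ioi c) = 1 - cdf ν c := by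
  rw [← Set.compl_Iic, probReal_compl_eq_one_sub measurableSet_Iic, cdf_eq_real]

lemma measureReal_lt_abs_eq_one_sub_cdf (ν : Measure ℝ) [IsProbabilityMeasure ν]
    [NullSingletonClass ν] {c : ℝ} (hc : 0 ≤ c) :
    ν.real {t | c < |t|} = 1 - (cdf ν c - cdf ν (-c)) := by
  have hcompl : {t : ℝ | c < |t|} = (Set.Icc (-c) c)ᶜ := by
    ext t
    rw [Set.mem_ofPred_eq, Set.mem_compl_iff, Set.mem_Icc, ← abs_le, not_le]
  have hIoc := (cdf ν).measure_Ioc (-c) c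
  rw [measure_cdf] at hIoc
  rw [hcompl, probReal_compl_eq_one_sub measurableSet_Icc, ← measureReal_congr Ioc_ae_eq_Icc,
    measureReal_def, hIoc, ENNReal.toReal_ofReal (sub_nonneg.mpr (monotone_cdf ν (by linarith)))]

lemma measure_abs_eq_zero {X : Ω → ℝ} (hX : Measurable X) [NullSingletonClass (μ.map X)]
    (c : ℝ) : μ {ω | |X ω| = c} = 0 := by
  have hnull : μ.map X {c, -c} = 0 := (Set.toFinite _).measure_zero _
  rw [Measure.map_apply hX (Set.toFinite _).measurableSet] at hnull
  refine measure_mono_null (fun ω (hω : |X ω| = c) => ?_) hnull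
  subst hω
  rcases abs_choice (X ω) with h | h
  · exact Or.inl h.symm
  · exact Or.inr (Set.mem_singleton_iff.mpr (by rw [h, neg_neg]))

lemma measure_abs_eq_abs_eq_zero [IsFiniteMeasure μ] {X Y : Ω → ℝ} (hX : Measurable X)
    (hY : Measurable Y) (hXY : IndepFun X Y μ) [NullSingletonClass (μ.map Y)] :
    μ {ω | |X ω| = |Y ω|} = 0 := by
  have hs : MeasurableSet {p : ℝ × ℝ | |p.1| = |p.2|} :=
    measurableSet_eq_fun measurable_fst.abs measurable_snd.abs
  have hslice (x : ℝ) : μ.map Y (Prod.mk x ⁻¹' {p : ℝ × ℝ | |p.1| = |p.2|}) = 0 :=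
    measure_mono_null (fun y (hy : |x| = |y|) => abs_eq_abs.mp hy.symm)
      ((Set.toFinite {x, -x}).measure_zero _)
  change μ ((fun ω => (X ω, Y ω)) ⁻¹' {p | |p.1| = |p.2|}) = 0
  rw [← Measure.map_apply (hX.prodMk hY) hs,
    (indepFun_iff_map_prod_eq_prod_map_map hX.aemeasurable hY.aemeasurable).mp hXY,
    Measure.prod_apply hs, funext hslice, lintegral_zero]

lemma ae_injective_abs {ι : Type*} [Countable ι] [IsFiniteMeasure μ] {Y : ι → Ω → ℝ}
    (hY : ∀ i, Measurable (Y i)) (hindep : Pairwise fun i j => IndepFun (Y i) (Y j) μ)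
    [∀ i, NullSingletonClass (μ.map (Y i))] : ∀ᵐ ω ∂μ, Function.Injective fun i => |Y i ω| := by
  have hne : ∀ᵐ ω ∂μ, ∀ i j, i ≠ j → |Y i ω| ≠ |Y j ω| := by
    refine ae_all_iff.mpr fun i => ae_all_iff.mpr fun j => ?_
    rcases eq_or_ne i j with rfl | hij
    · exact ae_of_all _ fun _ h => absurd rfl h
    · exact (measure_eq_zero_iff_ae_notMem.mp
        (measure_abs_eq_abs_eq_zero (hY i) (hY j) (hindep hij))).mono fun _ h _ => h
  filter_upwards [hne] with ω hω i j hij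
  by_contra h
  exact hω i j h hij

lemma ae_tendsto_card_filter_div {α : Type*} [MeasurableSpace α] [IsFiniteMeasure μ]
    {Y : ℕ → Ω → α} (hindep : Pairwise fun i j => IndepFun (Y i) (Y j) μ)
    (hident : ∀ i, IdentDistrib (Y i) (Y 0) μ μ) {p : α → Prop} [DecidablePred p]
    (hp : MeasurableSet {a | p a}) :
    ∀ᵐ ω ∂μ, Tendsto (fun n : ℕ => (#{i ∈ range n | p (Y i ω)} : ℝ) / n) atTop
      (𝓝 ((μ.map (Y 0)).real {a | p a})) := by
  set g : α → ℝ := fun a => if p a then 1 else 0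
  have hg : Measurable g := Measurable.ite hp measurable_const measurable_const
  have hY0 := (hident 0).aemeasurable_fst
  have hint : Integrable (fun ω => g (Y 0 ω)) μ :=
    (integrable_const 1).mono' (hg.comp_aemeasurable hY0).aestronglyMeasurable
      (ae_of_all _ fun ω => by simp only [g]; split_ifs <;> simp)
  have hmean : μ[fun ω => g (Y 0 ω)] = (μ.map (Y 0)).real {a | p a} := by
    rw [← integral_map hY0 hg.aestronglyMeasurable, ← integral_indicator_one hp]
    congr 1
    ext a
    simp [g, Set.indicator_apply]
  have hslln := strong_law_ae (fun i ω => g (Y i ω)) hint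
    (fun i j hij => (hindep hij).comp hg hg) fun i => (hident i).comp hg
  filter_upwards [hslln] with ω hω
  rw [← hmean]
  refine hω.congr fun n => ?_
  simp only [g, smul_eq_mul, sum_boole, inv_mul_eq_div]

lemma measurable_card_filter {ι : Type*} (s : Finset ι)
    {P : ι → Ω → Prop} [∀ i ω, Decidable (P i ω)] (hP : ∀ i, MeasurableSet {ω | P i ω}) :
    Measurable fun ω => #{i ∈ s | P i ω} := by
  simp_rw [card_filter]
  exact Finset.measurable_sum s fun i _ => Measurable.ite (hP i) measurable_const measurable_const

end Probability

theorem stmt_10_general {Ω : Type*} [MeasurableSpace Ω] (μ : Measure Ω) [IsProbabilityMeasure μ]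
    (Y : ℕ → Ω → ℝ) (hYmeas : ∀ i, Measurable (Y i))
    (hindep : iIndepFun Y μ)
    (hident : ∀ i, Measure.map (Y i) μ = Measure.map (Y 0) μ)
    (F : ℝ → ℝ) (hF : ∀ t : ℝ, F t = (μ {ω | Y 0 ω ≤ t}).toReal)
    (hFc : Continuous F)
    (lam₁ : ℝ) (hlam₁ : 0 < lam₁) (hlam₁' : lam₁ < 1)
    (y₀ : ℝ) (hy₀ : 0 ≤ y₀) (hH : F y₀ - F (-y₀) = 1 - lam₁) :
    ∀ ε : ℝ, 0 < ε →
      Tendsto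
        (fun I : ℕ =>
          μ {ω | ε ≤
            |((((Finset.range I).filter fun i =>
                    0 < Y i ω ∧
                      (((Finset.range I).filter fun j =>
                          |Y i ω| ≤ |Y j ω|).card ≤ ⌈lam₁ * I⌉₊)).card : ℝ) /
                (⌈lam₁ * I⌉₊ : ℝ)) - (1 - F y₀) / lam₁|})
        atTop (nhds 0) := by
  intro ε hε
  suffices h : TendstoInMeasure μ (fun (I : ℕ) ω =>
      (#{i ∈ range I | 0 < Y i ω ∧ #{j ∈ range I | |Y i ω| ≤ |Y j ω|} ≤ ⌈lam₁ * I⌉₊} : ℝ) /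
        ⌈lam₁ * I⌉₊) atTop fun _ => (1 - F y₀) / lam₁ by
    simpa only [Real.dist_eq] using tendstoInMeasure_iff_dist.mp h ε hε
  have := Measure.isProbabilityMeasure_map (μ := μ) (hYmeas 0).aemeasurable
  have hcdf : cdf (μ.map (Y 0)) = F := funext fun t => by rw [cdf_map_apply (hYmeas 0), hF]
  have hatom₀ := nullSingletonClass_of_continuous_cdf (hcdf ▸ hFc)
  have hatom (i : ℕ) : NullSingletonClass (μ.map (Y i)) := hident i ▸ hatom₀
  have hpair : Pairwise fun i j => IndepFun (Y i) (Y j) μ := fun i j hij => hindep.indepFun hij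
  have hid (i : ℕ) : IdentDistrib (Y i) (Y 0) μ μ :=
    ⟨(hYmeas i).aemeasurable, (hYmeas 0).aemeasurable, hident i⟩
  have hpos := ae_tendsto_card_filter_div hpair hid (p := fun t => y₀ < t) measurableSet_Ioi
  have habs := ae_tendsto_card_filter_div hpair hid (p := fun t => y₀ < |t|)
    (measurableSet_lt measurable_const measurable_abs)
  rw [show {t : ℝ | y₀ < t} = Set.Ioi y₀ from rfl, measureReal_Ioi_eq_one_sub_cdf, hcdf] at hpos
  rw [measureReal_lt_abs_eq_one_sub_cdf _ hy₀, hcdf, hH, sub_sub_cancel] at habs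
  have hne : ∀ᵐ ω ∂μ, ∀ i, |Y i ω| ≠ y₀ := ae_all_iff.mpr fun i =>
    measure_eq_zero_iff_ae_notMem.mp (measure_abs_eq_zero (hYmeas i) y₀)
  refine tendstoInMeasure_of_tendsto_ae (fun I => ?_) ?_
  · refine ((measurable_from_nat.comp (measurable_card_filter _ fun i => ?_)).div_const _)
      |>.aestronglyMeasurable
    exact (measurableSet_lt measurable_const (hYmeas i)).inter
      (measurable_card_filter _ (fun j => measurableSet_le (hYmeas i).abs (hYmeas j).abs)
        measurableSet_Iic)
  · filter_upwards [hpos, habs, ae_injective_abs hYmeas hpair, hne] with ω hpos habs hinj hne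
    simpa only [filter_topSet, rankIn] using
      tendsto_card_pos_topSet_div hlam₁ hlam₁'.le hy₀ hinj hne hpos habs

/-- In the favorable situation, with `Y₁, Y₂, …` i.i.d. from a continuous strictly
increasing CDF `F`, the proportion of positive `Y_i` among the `⌈λ₁·I⌉` pairs with
largest `|Y_i|` converges in probability to `ζ(λ₁)/λ₁`, where
`ζ(λ₁) = 1 − F(H⁻¹(1−λ₁))` and `H(y) = F(y) − F(−y)`, i.e. `y₀ := H⁻¹(1−λ₁)`
satisfies `y₀ ≥ 0` and `F(y₀) − F(−y₀) = 1 − λ₁`. -/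
theorem stmt_10 {Ω : Type*} [MeasurableSpace Ω] (μ : Measure Ω) [IsProbabilityMeasure μ]
    (Y : ℕ → Ω → ℝ) (hYmeas : ∀ i, Measurable (Y i))
    (hindep : iIndepFun Y μ)
    (hident : ∀ i, Measure.map (Y i) μ = Measure.map (Y 0) μ)
    (F : ℝ → ℝ) (hF : ∀ t : ℝ, F t = (μ {ω | Y 0 ω ≤ t}).toReal)
    (hFc : Continuous F) (hFm : StrictMono F)
    (lam₁ : ℝ) (hlam₁ : 0 < lam₁) (hlam₁' : lam₁ < 1)
    (y₀ : ℝ) (hy₀ : 0 ≤ y₀) (hH : F y₀ - F (-y₀) = 1 - lam₁) :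
    ∀ ε : ℝ, 0 < ε →
      Tendsto
        (fun I : ℕ =>
          μ {ω | ε ≤
            |((((Finset.range I).filter fun i =>
                    0 < Y i ω ∧
                      (((Finset.range I).filter fun j =>
                          |Y i ω| ≤ |Y j ω|).card ≤ ⌈lam₁ * I⌉₊)).card : ℝ) /
                (⌈lam₁ * I⌉₊ : ℝ)) - (1 - F y₀) / lam₁|})
        atTop (nhds 0) :=
  stmt_10_general μ Y hYmeas hindep hident F hF hFc lam₁ hlam₁ hlam₁' y₀ hy₀ hH
end
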